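/- arXiv:2406.11223 — 11 statements merged into one kernel-verified Lean document; each statement's English description precedes it below -/
import Mathlib

section
/- Let X be a Banach lattice, (x_n) a sequence in X, and x ∈ X. Then (x_n) converges uniformly to x (i.e., there exists z ∈ X with z ≥ 0 such that for every m ≥ 1, |x_n − x| ≤ z/m for all but finitely many n) if and only if for every ε > 0 there exists k such that for all m ≥ k, ‖⋁_{n=k}^m |x_n − x|‖ < ε. -/
/-!
(⇒) is solidity of the norm: once `|x n - x₀| ≤ z / M` for `n ≥ k`, every finite supremum
`⋁_{n=k}^m |x n - x₀|` has norm at most `‖z‖ / M`.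

(⇐) The hypothesis makes the partial suprema `⋁_{n=k}^{k+m} |x n - x₀|` a monotone Cauchy
sequence in `m`, so by completeness they converge to an eventual upper bound `y` of
`|x n - x₀|` of norm at most `ε`. Taking such bounds `y j` with `‖y j‖ ≤ 2⁻ʲ`, the regulator is
`z = ∑ j • y j`, since `y m ≤ m⁻¹ • z`.

Real scalars act monotonically because the positive cone is closed, so `c • v` is a limit of
dyadic multiples `(⌊2ᵏ c⌋₊ / 2ᵏ) • v`, whose nonnegativity only needs `0 ≤ 2 • a → 0 ≤ a`.
-/

open Filter Topology Finset

section LatticeOrderedGroup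

variable {α : Type*} [AddCommGroup α] [Lattice α] [IsOrderedAddMonoid α]

theorem nonneg_of_two_pow_nsmul_nonneg {a : α} : ∀ k : ℕ, 0 ≤ 2 ^ k • a → 0 ≤ a
  | 0, h => by simpa using h
  | k + 1, h => nonneg_of_two_pow_nsmul_nonneg k <| nsmul_two_semiclosed <| by
      rwa [← mul_nsmul', ← pow_succ']

theorem dyadic_smul_nonneg [Module ℝ α] {v : α} (hv : 0 ≤ v) (n k : ℕ) :
    0 ≤ ((n : ℝ) / 2 ^ k) • v := by
  refine nonneg_of_two_pow_nsmul_nonneg k ?_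
  rw [← Nat.cast_smul_eq_nsmul ℝ, smul_smul, Nat.cast_pow, Nat.cast_ofNat,
    mul_div_cancel₀ _ (by positivity), Nat.cast_smul_eq_nsmul]
  exact nsmul_nonneg hv n

theorem sup'_Icc_nonneg {β : Type*} [Lattice β] [Zero β] {a : ℕ → β} (ha : ∀ n, 0 ≤ a n)
    {k m : ℕ} (hkm : k ≤ m) : 0 ≤ (Icc k m).sup' (nonempty_Icc.mpr hkm) a :=
  (ha k).trans (le_sup' a (left_mem_Icc.mpr hkm))

theorem sup'_Icc_le_add {a : ℕ → α} (ha : ∀ n, 0 ≤ a n) {k j m n : ℕ}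
    (hkm : k ≤ m) (hjm : j ≤ m) (hmn : m ≤ n) :
    (Icc k n).sup' (nonempty_Icc.mpr (hkm.trans hmn)) a ≤
      (Icc k m).sup' (nonempty_Icc.mpr hkm) a +
        (Icc j n).sup' (nonempty_Icc.mpr (hjm.trans hmn)) a := by
  refine sup'_le _ _ fun i hi => ?_
  obtain ⟨hki, hin⟩ := mem_Icc.1 hi
  rcases le_total i m with him | hmi
  · exact (le_sup' a (mem_Icc.2 ⟨hki, him⟩)).trans
      (le_add_of_nonneg_right (sup'_Icc_nonneg ha (hjm.trans hmn)))
  · exact (le_sup' a (mem_Icc.2 ⟨hjm.trans hmi, hin⟩)).trans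
      (le_add_of_nonneg_left (sup'_Icc_nonneg ha hkm))

end LatticeOrderedGroup

section SolidNorm

variable {X : Type*} [NormedAddCommGroup X] [Lattice X] [HasSolidNorm X] [IsOrderedAddMonoid X]
  {a : ℕ → X}

theorem norm_le_norm_of_nonneg_of_le {b c : X} (hb : 0 ≤ b) (hbc : b ≤ c) : ‖b‖ ≤ ‖c‖ :=
  norm_le_norm_of_abs_le_abs <| by rwa [abs_of_nonneg hb, abs_of_nonneg (hb.trans hbc)]

theorem exists_eventually_le_of_norm_sup'_Icc_lt [CompleteSpace X] (ha : ∀ n, 0 ≤ a n)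
    (h : ∀ ε : ℝ, 0 < ε → ∃ k : ℕ, ∀ m : ℕ, ∀ h : k ≤ m,
      ‖(Icc k m).sup' (nonempty_Icc.mpr h) a‖ < ε) {ε : ℝ} (hε : 0 < ε) :
    ∃ y : X, 0 ≤ y ∧ ‖y‖ ≤ ε ∧ ∀ᶠ n in atTop, a n ≤ y := by
  obtain ⟨k, hk⟩ := h ε hε
  set u : ℕ → X := fun m => (Icc k (k + m)).sup' (nonempty_Icc.mpr (k.le_add_right m)) a
  have hu_mono : Monotone u := fun m m' hmm' =>
    sup'_mono a (Icc_subset_Icc le_rfl (by omega)) _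
  have hu_cauchy : CauchySeq u := by
    rw [Metric.cauchySeq_iff']
    intro δ hδ
    obtain ⟨k', hk'⟩ := h δ hδ
    refine ⟨k', fun n hn => ?_⟩
    rw [dist_eq_norm]
    refine (norm_le_norm_of_nonneg_of_le (sub_nonneg.2 (hu_mono hn)) ?_).trans_lt
      (hk' (k + n) (by omega))
    rw [sub_le_iff_le_add']
    exact sup'_Icc_le_add ha (by omega) (by omega) (by omega)
  obtain ⟨y, hy⟩ := cauchySeq_tendsto_of_complete hu_cauchy
  refine ⟨y, (sup'_Icc_nonneg ha (k.le_add_right 0)).trans (hu_mono.ge_of_tendsto hy 0),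
    le_of_tendsto' hy.norm fun m => (hk _ (k.le_add_right m)).le, ?_⟩
  filter_upwards [eventually_ge_atTop k] with n hn
  exact (le_sup' a (mem_Icc.2 ⟨hn, by omega⟩) : a n ≤ u (n - k)).trans
    (hu_mono.ge_of_tendsto hy _)

variable [NormedSpace ℝ X]

theorem HasSolidNorm.smul_nonneg {c : ℝ} (hc : 0 ≤ c) {v : X} (hv : 0 ≤ v) : 0 ≤ c • v := by
  have hdyadic : Tendsto (fun k : ℕ => (⌊c * 2 ^ k⌋₊ : ℝ) / 2 ^ k) atTop (𝓝 c) :=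
    (tendsto_nat_floor_mul_div_atTop hc).comp (tendsto_pow_atTop_atTop_of_one_lt one_lt_two)
  exact ge_of_tendsto' (hdyadic.smul_const v) fun k => dyadic_smul_nonneg hv _ k

instance HasSolidNorm.posSMulMono : PosSMulMono ℝ X :=
  .of_smul_nonneg fun _ hc _ hv => HasSolidNorm.smul_nonneg hc hv

theorem exists_norm_sup'_Icc_lt_of_eventually_le_inv_smul (ha : ∀ n, 0 ≤ a n) {z : X}
    (hz : ∀ m : ℕ, 1 ≤ m → ∀ᶠ n in atTop, a n ≤ (m : ℝ)⁻¹ • z) {ε : ℝ} (hε : 0 < ε) :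
    ∃ k : ℕ, ∀ m : ℕ, ∀ h : k ≤ m, ‖(Icc k m).sup' (nonempty_Icc.mpr h) a‖ < ε := by
  obtain ⟨M, hM⟩ := exists_nat_gt (‖z‖ / ε)
  have hM_pos : (0 : ℝ) < M := (div_nonneg (norm_nonneg z) hε.le).trans_lt hM
  obtain ⟨k, hk⟩ := eventually_atTop.1 (hz M (Nat.cast_pos.1 hM_pos))
  refine ⟨k, fun m hkm => ?_⟩
  calc ‖(Icc k m).sup' (nonempty_Icc.mpr hkm) a‖
      ≤ ‖(M : ℝ)⁻¹ • z‖ := norm_le_norm_of_nonneg_of_le (sup'_Icc_nonneg ha hkm)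
        (sup'_le _ _ fun n hn => hk n (mem_Icc.1 hn).1)
    _ = ‖z‖ / M := by rw [norm_smul, norm_inv, Real.norm_natCast, inv_mul_eq_div]
    _ < ε := by rwa [div_lt_iff₀ hM_pos, mul_comm, ← div_lt_iff₀ hε]

theorem exists_regulator_of_exists_eventually_le [CompleteSpace X]
    (h : ∀ ε : ℝ, 0 < ε → ∃ y : X, 0 ≤ y ∧ ‖y‖ ≤ ε ∧ ∀ᶠ n in atTop, a n ≤ y) :
    ∃ z : X, 0 ≤ z ∧ ∀ m : ℕ, 1 ≤ m → ∀ᶠ n in atTop, a n ≤ (m : ℝ)⁻¹ • z := by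
  choose y hy0 hy hay using fun j : ℕ => h ((1 / 2) ^ j) (by positivity)
  have hsum : Summable fun j : ℕ => j • y j := by
    refine .of_norm_bounded (g := fun j : ℕ => (j : ℝ) * (1 / 2) ^ j) ?_ fun j => ?_
    · simpa using summable_pow_mul_geometric_of_norm_lt_one 1 (r := (1 / 2 : ℝ)) (by norm_num)
    · exact (norm_nsmul_le (n := j) (a := y j)).trans (by gcongr; exact hy j)
  have hz0 : ∀ j, 0 ≤ j • y j := fun j => nsmul_nonneg (hy0 j) j
  refine ⟨∑' j, j • y j, tsum_nonneg hz0, fun m hm => ?_⟩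
  filter_upwards [hay m] with n hn
  calc a n ≤ y m := hn
    _ = (m : ℝ)⁻¹ • ((m : ℝ) • y m) := by rw [inv_smul_smul₀ (by positivity)]
    _ ≤ (m : ℝ)⁻¹ • ∑' j, j • y j := by
      rw [Nat.cast_smul_eq_nsmul]
      gcongr
      exact hsum.le_tsum m fun j _ => hz0 j

end SolidNorm

/-- In a Banach lattice, uniform convergence of `(x n)` to `x₀` is equivalent to:
for every `ε > 0` there is `k` such that for all `m ≥ k`,
`‖⋁_{n=k}^m |x n − x₀|‖ < ε`. -/
theorem uniform_convergence_iff {X : Type*} [NormedAddCommGroup X] [Lattice X]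
    [HasSolidNorm X] [IsOrderedAddMonoid X]
    [NormedSpace ℝ X] [CompleteSpace X] (x : ℕ → X) (x₀ : X) :
    (∃ z : X, 0 ≤ z ∧ ∀ m : ℕ, 1 ≤ m →
        ∀ᶠ n in atTop, |x n - x₀| ≤ (m : ℝ)⁻¹ • z) ↔
      (∀ ε : ℝ, 0 < ε → ∃ k : ℕ, ∀ m : ℕ, ∀ h : k ≤ m,
        ‖(Finset.Icc k m).sup' (Finset.nonempty_Icc.mpr h) (fun n => |x n - x₀|)‖ < ε) := by
  have habs : ∀ n, 0 ≤ |x n - x₀| := fun n => abs_nonneg _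
  constructor
  · rintro ⟨z, -, hz⟩ ε hε
    exact exists_norm_sup'_Icc_lt_of_eventually_le_inv_smul habs hz hε
  · exact fun h => exists_regulator_of_exists_eventually_le fun ε hε =>
      exists_eventually_le_of_norm_sup'_Icc_lt habs h hε
end

section
/- Let X be a Banach lattice and suppose (x_n) is a sequence in X and x ∈ X such that for every ε > 0 there exists k with ‖⋁_{n=k}^m |x_n − x|‖ < ε for all m ≥ k. Then there exists a strictly increasing sequence 0 = k_0 < k_1 < k_2 < … such that the series ∑_{l=0}^∞ 2^l ⋁_{n=k_l}^{k_{l+1}−1} |x_n − x| converges in norm to some z ∈ X₊, and for every l ≥ 1 and all n ≥ k_l one has |x_n − x| ≤ z/2^l. -/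
/-!
Choose thresholds `K l` past which every finite supremum of `|x n - x₀|` has norm below
`(1/4)^l`, and cut `ℕ` into blocks `[k l, k (l + 1))` starting past them. The supremum `s l`
over the `l`-th block then has norm at most `(1/4)^l`, so `∑ 2^l • s l` converges absolutely to
some `z ≥ 0` dominating each of its terms. If `n ≥ k l` lies in block `j ≥ l`, then
`2^l • |x n - x₀| ≤ 2^j • s j ≤ z`. Since `X` is not assumed to be an ordered `ℝ`-module,
dividing by `2^l` goes through the lattice-ordered group fact `0 ≤ 2 • a → 0 ≤ a`.
-/

open Filter

lemma nonneg_of_two_pow_nsmul_nonneg_s1 {α : Type*} [Lattice α] [AddGroup α] [AddLeftMono α]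
    [AddRightMono α] : ∀ {n : ℕ} {a : α}, 0 ≤ 2 ^ n • a → 0 ≤ a
  | 0, _, h => by simpa using h
  | n + 1, _, h =>
    nsmul_two_semiclosed (nonneg_of_two_pow_nsmul_nonneg_s1 (by rwa [pow_succ, mul_nsmul'] at h))

section RealModule

variable {X : Type*} [AddCommGroup X] [Module ℝ X]

lemma two_pow_nsmul_eq_smul (n : ℕ) (a : X) : 2 ^ n • a = (2 : ℝ) ^ n • a := by
  rw [← Nat.cast_smul_eq_nsmul ℝ]
  norm_num

lemma le_inv_two_pow_smul_of_two_pow_nsmul_le [Lattice X] [IsOrderedAddMonoid X] {a b : X} {n : ℕ}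
    (h : 2 ^ n • a ≤ b) : a ≤ ((2 : ℝ) ^ n)⁻¹ • b := by
  refine sub_nonneg.1 (nonneg_of_two_pow_nsmul_nonneg_s1 (n := n) ?_)
  rwa [nsmul_sub, two_pow_nsmul_eq_smul n (_ • b), smul_inv_smul₀ (by positivity), sub_nonneg]

end RealModule

lemma exists_strictMono_zero_ge (K : ℕ → ℕ) :
    ∃ k : ℕ → ℕ, StrictMono k ∧ k 0 = 0 ∧ ∀ l, 1 ≤ l → K l ≤ k l := by
  let k : ℕ → ℕ := fun l => Nat.rec 0 (fun l kl => max (K (l + 1)) kl + 1) l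
  refine ⟨k, strictMono_nat_of_lt_succ fun l => ?_, rfl, fun l hl => ?_⟩
  · change k l < max (K (l + 1)) (k l) + 1
    omega
  · obtain ⟨l, rfl⟩ := Nat.exists_eq_add_of_le' hl
    change K (l + 1) ≤ max (K (l + 1)) (k l) + 1
    omega

lemma StrictMono.exists_le_lt_succ {k : ℕ → ℕ} (hk : StrictMono k) (h0 : k 0 = 0) :
    ∀ n, ∃ j, k j ≤ n ∧ n < k (j + 1)
  | 0 => ⟨0, h0.le, h0.symm.trans_lt (hk Nat.zero_lt_one)⟩
  | n + 1 => by
    obtain ⟨j, hjn, hnj⟩ := hk.exists_le_lt_succ h0 n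
    rcases (Nat.succ_le_of_lt hnj).lt_or_eq with hlt | heq
    · exact ⟨j, by omega, hlt⟩
    · exact ⟨j + 1, heq.ge, heq.trans_lt (hk (j + 1).lt_succ_self)⟩

section BlockSup

variable {X : Type*} [Lattice X] {k : ℕ → ℕ} (hk : StrictMono k) (d : ℕ → X)

def blockSup (l : ℕ) : X :=
  (Finset.Ico (k l) (k (l + 1))).sup' (Finset.nonempty_Ico.mpr (hk (Nat.lt_succ_self l))) d

lemma le_blockSup {j n : ℕ} (hjn : k j ≤ n) (hnj : n < k (j + 1)) : d n ≤ blockSup hk d j :=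
  Finset.le_sup' d (Finset.mem_Ico.2 ⟨hjn, hnj⟩)

lemma blockSup_nonneg [Zero X] {d : ℕ → X} (hd : ∀ n, 0 ≤ d n) (l : ℕ) :
    0 ≤ blockSup hk d l :=
  (hd (k l)).trans (le_blockSup hk d le_rfl (hk l.lt_succ_self))

lemma blockSup_le_sup'_Icc {K l : ℕ} (hK : K ≤ k l) :
    blockSup hk d l ≤ (Finset.Icc K (k (l + 1) - 1)).sup'
      (Finset.nonempty_Icc.2 (hK.trans (Nat.le_sub_one_of_lt (hk l.lt_succ_self)))) d :=
  Finset.sup'_mono d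
    (fun n hn => by simp only [Finset.mem_Ico, Finset.mem_Icc] at hn ⊢; omega) _

end BlockSup

lemma norm_blockSup_lt {X : Type*} [NormedAddCommGroup X] [Lattice X] [HasSolidNorm X]
    [IsOrderedAddMonoid X] {k : ℕ → ℕ} (hk : StrictMono k) {d : ℕ → X} (hd : ∀ n, 0 ≤ d n)
    {K : ℕ} {ε : ℝ}
    (hK : ∀ m (h : K ≤ m), ‖(Finset.Icc K m).sup' (Finset.nonempty_Icc.2 h) d‖ < ε)
    {l : ℕ} (hKl : K ≤ k l) : ‖blockSup hk d l‖ < ε := by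
  have hle := blockSup_le_sup'_Icc hk d hKl
  refine (norm_le_norm_of_abs_le_abs ?_).trans_lt
    (hK _ (hKl.trans (Nat.le_sub_one_of_lt (hk l.lt_succ_self))))
  rwa [abs_of_nonneg (blockSup_nonneg hk hd l),
    abs_of_nonneg ((blockSup_nonneg hk hd l).trans hle)]

lemma summable_two_pow_smul_of_norm_le {E : Type*} [NormedAddCommGroup E] [NormedSpace ℝ E]
    [CompleteSpace E] {s : ℕ → E} (hs : ∀ᶠ l in atTop, ‖s l‖ ≤ (1 / 4 : ℝ) ^ l) :
    Summable fun l => (2 : ℝ) ^ l • s l := by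
  refine .of_norm_bounded_eventually_nat summable_geometric_two (hs.mono fun l hl => ?_)
  calc ‖(2 : ℝ) ^ l • s l‖ = 2 ^ l * ‖s l‖ := by simp [norm_smul]
    _ ≤ 2 ^ l * (1 / 4) ^ l := by gcongr
    _ = (1 / 2) ^ l := by rw [← mul_pow]; norm_num

/-- In a Banach lattice, if for every `ε > 0` there is `k` with
`‖⋁_{n=k}^m |x n − x₀|‖ < ε` for all `m ≥ k`, then there is a strictly increasing
sequence `0 = k 0 < k 1 < …` such that the series
`∑_l 2^l ⋁_{n = k l}^{k (l+1) - 1} |x n − x₀|` converges in norm to some `z ≥ 0`, and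
for every `l ≥ 1` and `n ≥ k l`, `|x n − x₀| ≤ z / 2^l`. -/
theorem exists_dominating_series {X : Type*} [NormedAddCommGroup X] [Lattice X]
    [HasSolidNorm X] [IsOrderedAddMonoid X]
    [NormedSpace ℝ X] [CompleteSpace X] (x : ℕ → X) (x₀ : X)
    (h : ∀ ε : ℝ, 0 < ε → ∃ k : ℕ, ∀ m : ℕ, ∀ h : k ≤ m,
      ‖(Finset.Icc k m).sup' (Finset.nonempty_Icc.mpr h) (fun n => |x n - x₀|)‖ < ε) :
    ∃ k : ℕ → ℕ, ∃ hk : StrictMono k, k 0 = 0 ∧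
      ∃ z : X, 0 ≤ z ∧
        Tendsto
          (fun L : ℕ => ∑ l ∈ Finset.range L,
            (2 ^ l : ℝ) •
              (Finset.Ico (k l) (k (l + 1))).sup'
                (Finset.nonempty_Ico.mpr (hk (Nat.lt_succ_self l)))
                (fun n => |x n - x₀|))
          atTop (nhds z) ∧
        ∀ l : ℕ, 1 ≤ l → ∀ n : ℕ, k l ≤ n → |x n - x₀| ≤ ((2 : ℝ) ^ l)⁻¹ • z := by
  choose K hK using fun l : ℕ => h ((1 / 4) ^ l) (by positivity)
  obtain ⟨k, hk, hk0, hKk⟩ := exists_strictMono_zero_ge K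
  have hd : ∀ n, 0 ≤ |x n - x₀| := fun n => abs_nonneg _
  set s := blockSup hk fun n => |x n - x₀|
  have hsum : Summable fun l => (2 : ℝ) ^ l • s l := summable_two_pow_smul_of_norm_le <|
    eventually_atTop.2 ⟨1, fun l hl => (norm_blockSup_lt hk hd (hK l) (hKk l hl)).le⟩
  have hterm : ∀ l, 0 ≤ (2 : ℝ) ^ l • s l := fun l => by
    rw [← two_pow_nsmul_eq_smul]
    exact nsmul_nonneg (blockSup_nonneg hk hd l) _
  refine ⟨k, hk, hk0, _, tsum_nonneg hterm, hsum.hasSum.tendsto_sum_nat, fun l _ n hn => ?_⟩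
  obtain ⟨j, hjn, hnj⟩ := hk.exists_le_lt_succ hk0 n
  have hlj : l ≤ j := Nat.lt_succ_iff.1 (hk.lt_iff_lt.1 (hn.trans_lt hnj))
  refine le_inv_two_pow_smul_of_two_pow_nsmul_le ?_
  calc 2 ^ l • |x n - x₀|
      _ ≤ 2 ^ l • s j :=
        nsmul_le_nsmul_right (le_blockSup hk (fun n => |x n - x₀|) hjn hnj) _
      _ ≤ 2 ^ j • s j :=
        nsmul_le_nsmul_left (blockSup_nonneg hk hd j) (Nat.pow_le_pow_right two_pos hlj)
      _ = (2 : ℝ) ^ j • s j := two_pow_nsmul_eq_smul j _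
      _ ≤ ∑' l, (2 : ℝ) ^ l • s l := hsum.le_tsum j fun i _ => hterm i
end

section
/- Let X be a Banach lattice, (x_n) a sequence in X, and x ∈ X. Then (x_n) order converges to x (i.e., there exists a decreasing net (z_μ) with infimum 0 such that for each μ, |x_n − x| ≤ z_μ for all but finitely many n) if and only if for every y > 0 there exists z ∈ X such that y ≰ z and |x_n − x| ≤ z for all but finitely many n. -/
open Filter

universe u

/-- `(x n)` order converges to `x₀`: there is a decreasing net `(z μ)`, indexed by a
(nonempty, upward directed) preordered set, with infimum `0`, such that for every `μ`,
`|x n − x₀| ≤ z μ` for all but finitely many `n`. -/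
def OrderConvergesTo {X : Type u} [Lattice X] [AddCommGroup X] (x : ℕ → X) (x₀ : X) : Prop :=
  ∃ (ι : Type u) (le : ι → ι → Prop), Nonempty ι ∧
    (∀ a, le a a) ∧ (∀ a b c, le a b → le b c → le a c) ∧
    (∀ a b, ∃ c, le a c ∧ le b c) ∧
    ∃ z : ι → X, (∀ a b, le a b → z b ≤ z a) ∧ IsGLB (Set.range z) 0 ∧
      ∀ μ, ∀ᶠ n in atTop, |x n - x₀| ≤ z μ

/-!
Both sides say that `0` is the infimum of the set `S` of eventual upper bounds of `|x n − x₀|`.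
For order convergence, `S` itself, closed under `⊓` and ordered by `≥`, is the required net.
For the `y ≰ z` condition: since `S ≥ 0`, a lower bound `w` of `S` may be replaced by `w ⊔ 0`,
which must then fail to be positive.
-/

theorem isGLB_zero_iff_forall_exists_not_le {X : Type*} [Lattice X] [Zero X] {S : Set X}
    (hS : ∀ z ∈ S, 0 ≤ z) : IsGLB S 0 ↔ ∀ y, 0 < y → ∃ z ∈ S, ¬ y ≤ z := by
  constructor
  · intro hglb y hy
    by_contra! hle
    exact hy.not_ge (hglb.2 hle)
  · refine fun h => ⟨hS, fun w hw => ?_⟩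
    by_contra hw0
    have hpos : 0 < w ⊔ 0 := lt_of_le_of_ne le_sup_right fun e => hw0 (sup_eq_right.mp e.symm)
    obtain ⟨z, hz, hwz⟩ := h _ hpos
    exact hwz (sup_le (hw hz) (hS z hz))

section EventualBounds

variable {X : Type u} [Lattice X] [AddCommGroup X]

def eventualBounds (x : ℕ → X) (x₀ : X) : Set X :=
  {z | ∀ᶠ n in atTop, |x n - x₀| ≤ z}

variable {x : ℕ → X} {x₀ : X}

theorem inf_mem_eventualBounds {a b : X} (ha : a ∈ eventualBounds x x₀)
    (hb : b ∈ eventualBounds x x₀) : a ⊓ b ∈ eventualBounds x x₀ :=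
  (ha.and hb).mono fun _ hn => le_inf hn.1 hn.2

theorem nonneg_of_mem_eventualBounds [IsOrderedAddMonoid X] {z : X}
    (hz : z ∈ eventualBounds x x₀) : 0 ≤ z :=
  let ⟨_, hn⟩ := hz.exists
  (abs_nonneg _).trans hn

theorem eventualBounds_nonempty_of_isGLB (hglb : IsGLB (eventualBounds x x₀) 0) :
    (eventualBounds x x₀).Nonempty := by
  by_contra hempty
  have htop : ∀ w : X, w ≤ 0 := fun _ => hglb.2 fun z hz => (hempty ⟨z, hz⟩).elim
  exact hempty ⟨0, Eventually.of_forall fun _ => htop _⟩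

theorem OrderConvergesTo.of_isGLB_eventualBounds (hglb : IsGLB (eventualBounds x x₀) 0) :
    OrderConvergesTo x x₀ := by
  obtain ⟨z₀, hz₀⟩ := eventualBounds_nonempty_of_isGLB hglb
  refine ⟨eventualBounds x x₀, fun a b => (b : X) ≤ a, ⟨⟨z₀, hz₀⟩⟩, fun _ => le_rfl,
    fun _ _ _ hab hbc => hbc.trans hab,
    fun a b => ⟨⟨a ⊓ b, inf_mem_eventualBounds a.2 b.2⟩, inf_le_left, inf_le_right⟩,
    (↑), fun _ _ => id, ?_, fun μ => μ.2⟩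
  rwa [Subtype.range_coe]

theorem OrderConvergesTo.isGLB_eventualBounds [IsOrderedAddMonoid X]
    (h : OrderConvergesTo x x₀) : IsGLB (eventualBounds x x₀) 0 := by
  obtain ⟨_, -, -, -, -, -, z, -, hglb, hbound⟩ := h
  refine ⟨fun _ hw => nonneg_of_mem_eventualBounds hw, fun w hw => hglb.2 ?_⟩
  rintro _ ⟨μ, rfl⟩
  exact hw (hbound μ)

theorem orderConvergesTo_iff_isGLB_eventualBounds [IsOrderedAddMonoid X] :
    OrderConvergesTo x x₀ ↔ IsGLB (eventualBounds x x₀) 0 :=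
  ⟨OrderConvergesTo.isGLB_eventualBounds, OrderConvergesTo.of_isGLB_eventualBounds⟩

end EventualBounds

theorem orderConvergesTo_iff_general {X : Type u} [NormedAddCommGroup X] [Lattice X]
    [IsOrderedAddMonoid X] (x : ℕ → X) (x₀ : X) :
    OrderConvergesTo x x₀ ↔
      ∀ y : X, 0 < y → ∃ z : X, ¬ y ≤ z ∧ ∀ᶠ n in atTop, |x n - x₀| ≤ z := by
  rw [orderConvergesTo_iff_isGLB_eventualBounds,
    isGLB_zero_iff_forall_exists_not_le fun _ => nonneg_of_mem_eventualBounds]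
  simp only [eventualBounds, Set.mem_ofPred_eq, and_comm]

/-- In a Banach lattice, `(x n)` order converges to `x₀` iff for every `y > 0`
there is `z` with `y ≰ z` and `|x n − x₀| ≤ z` for all but finitely many `n`. -/
theorem orderConvergesTo_iff {X : Type u} [NormedAddCommGroup X] [Lattice X]
    [IsOrderedAddMonoid X] [HasSolidNorm X]
    [NormedSpace ℝ X] [CompleteSpace X] (x : ℕ → X) (x₀ : X) :
    OrderConvergesTo x x₀ ↔
      ∀ y : X, 0 < y → ∃ z : X, ¬ y ≤ z ∧ ∀ᶠ n in atTop, |x n - x₀| ≤ z :=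
  orderConvergesTo_iff_general x x₀
end

section
/- Let X be a separable Banach lattice. Then a sequence (x_n) in X order converges to x ∈ X if and only if it σ-order converges to x, i.e., there exists a decreasing sequence (z_m) in X with infimum 0 such that for every m, |x_n − x| ≤ z_m for all but finitely many n. -/
open Filter

universe u

/-- `(x n)` σ-order converges to `x₀`: there is a decreasing sequence `(z m)` with
infimum `0` such that for every `m`, `|x n − x₀| ≤ z m` for all but finitely many `n`. -/
def SigmaOrderConvergesTo {X : Type u} [Lattice X] [AddCommGroup X] (x : ℕ → X) (x₀ : X) :
    Prop :=
  ∃ z : ℕ → X, Antitone z ∧ IsGLB (Set.range z) 0 ∧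
    ∀ m, ∀ᶠ n in atTop, |x n - x₀| ≤ z m

/-!
A separable Banach lattice is second countable, hence hereditarily Lindelöf, and the sets
`{y | y ≤ z μ}` are closed. So the common lower bounds of a net `(z μ)` are already those of
countably many `z μ`; directedness dominates these indices by an increasing sequence `μ m`, and
the decreasing sequence `z (μ m)` has the same lower bounds, hence the same infimum `0`.
-/

open Set

theorem exists_monotone_ge_of_isDirectedOrder {ι : Type*} [Preorder ι] [IsDirectedOrder ι]
    (k : ℕ → ι) : ∃ μ : ℕ → ι, Monotone μ ∧ ∀ n, k n ≤ μ n := by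
  choose c hc_left hc_right using exists_ge_ge (α := ι)
  let μ : ℕ → ι := fun n => Nat.rec (k 0) (fun n p => c p (k (n + 1))) n
  refine ⟨μ, monotone_nat_of_le_succ fun n => hc_left _ _, ?_⟩
  rintro (_ | n)
  · exact le_rfl
  · exact hc_right _ _

theorem Antitone.exists_monotone_lowerBounds_range_comp_eq {X ι : Type*} [TopologicalSpace X]
    [Preorder X] [ClosedIicTopology X] [HereditarilyLindelofSpace X] [Preorder ι]
    [IsDirectedOrder ι] [Nonempty ι] {z : ι → X} (hz : Antitone z) :
    ∃ μ : ℕ → ι, Monotone μ ∧ lowerBounds (range (z ∘ μ)) = lowerBounds (range z) := by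
  obtain ⟨k, hk⟩ := eq_closed_inter_nat (fun i => Iic (z i)) fun i => isClosed_Iic
  obtain ⟨μ, hμ_mono, hkμ⟩ := exists_monotone_ge_of_isDirectedOrder k
  refine ⟨μ, hμ_mono, (lowerBounds_mono_set (range_comp_subset_range μ z)).antisymm' ?_⟩
  intro b hb
  have hb_inter : b ∈ ⋂ i, Iic (z i) := by
    rw [← hk, mem_iInter]
    exact fun n => (hb ⟨n, rfl⟩).trans (hz (hkμ n))
  rintro _ ⟨i, rfl⟩
  exact mem_iInter.1 hb_inter i

section

variable {X : Type u} [Lattice X] [AddCommGroup X] {x : ℕ → X} {x₀ : X}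

theorem SigmaOrderConvergesTo.orderConvergesTo (h : SigmaOrderConvergesTo x x₀) :
    OrderConvergesTo x x₀ := by
  obtain ⟨z, hz_anti, hz_glb, hz_ev⟩ := h
  refine ⟨ULift ℕ, (· ≤ ·), inferInstance, le_refl, fun _ _ _ => le_trans, exists_ge_ge,
    z ∘ ULift.down, fun _ _ hab => hz_anti hab, ?_, fun m => hz_ev m.down⟩
  rwa [ULift.down_surjective.range_comp]

theorem OrderConvergesTo.sigmaOrderConvergesTo [TopologicalSpace X] [ClosedIicTopology X]
    [HereditarilyLindelofSpace X] (h : OrderConvergesTo x x₀) : SigmaOrderConvergesTo x x₀ := by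
  obtain ⟨ι, le, hι, hrefl, htrans, hdir, z, hz_anti, hz_glb, hz_ev⟩ := h
  let : Preorder ι := { le := le, le_refl := hrefl, le_trans := htrans }
  have : IsDirectedOrder ι := ⟨hdir⟩
  have hz : Antitone z := fun a b => hz_anti a b
  obtain ⟨μ, hμ_mono, hμ_bounds⟩ := hz.exists_monotone_lowerBounds_range_comp_eq
  refine ⟨z ∘ μ, hz.comp_monotone hμ_mono, ?_, fun m => hz_ev (μ m)⟩
  rwa [IsGLB, hμ_bounds]

end

theorem orderConvergesTo_iff_sigmaOrderConvergesTo_general {X : Type u}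
    [NormedAddCommGroup X] [Lattice X] [HasSolidNorm X] [IsOrderedAddMonoid X]
    [TopologicalSpace.SeparableSpace X] (x : ℕ → X) (x₀ : X) :
    OrderConvergesTo x x₀ ↔ SigmaOrderConvergesTo x x₀ :=
  haveI := UniformSpace.secondCountable_of_separable X
  ⟨OrderConvergesTo.sigmaOrderConvergesTo, SigmaOrderConvergesTo.orderConvergesTo⟩

/-- In a separable Banach lattice, a sequence order converges to `x₀`
iff it σ-order converges to `x₀`. -/
theorem orderConvergesTo_iff_sigmaOrderConvergesTo {X : Type u}
    [NormedAddCommGroup X] [Lattice X] [HasSolidNorm X] [IsOrderedAddMonoid X] [NormedSpace ℝ X] [CompleteSpace X]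
    [TopologicalSpace.SeparableSpace X] (x : ℕ → X) (x₀ : X) :
    OrderConvergesTo x x₀ ↔ SigmaOrderConvergesTo x x₀ :=
  orderConvergesTo_iff_sigmaOrderConvergesTo_general x x₀
end

section
/- Suppose X is a Banach lattice with a countable π-basis B. Then for a sequence (x_n) and a vector x in X, the following are equivalent: (i) x_n order converges to x; (ii) x_n σ-order converges to x; (iii) for every b ∈ B there exists z ∈ X such that |x_n − x| ≤ z for all but finitely many n, and b is not strictly below z (i.e., ¬(b < z)). -/
open Filter

universe u

/-!
If `|x n - x₀|` is eventually dominated by the members of a net with infimum `0`, no `b > 0`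
lies strictly below all of them; this gives (iii) from (i). Conversely, pick for each `b` in
the π-basis a dominator `z b` with `¬ b < z b`. A lower bound `c` of all `z b` has `c⁺ ≤ z b`,
so `c⁺ > 0` would put some `b ∈ B` below `c⁺ ≤ z b`; hence the `z b` have infimum `0`. Since
`B` is countable, finite infima of an enumeration of the `z b` form a decreasing sequence with
infimum `0`, which is (ii); and a sequence is in particular a net.
-/

open Set

section LatticeGroup

variable {X : Type u} [Lattice X] [AddCommGroup X] {x : ℕ → X} {x₀ : X}

theorem OrderConvergesTo.exists_eventually_abs_sub_le_not_lt (h : OrderConvergesTo x x₀)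
    {b : X} (hb : 0 < b) : ∃ z : X, (∀ᶠ n in atTop, |x n - x₀| ≤ z) ∧ ¬ b < z := by
  obtain ⟨ι, -, -, -, -, -, z, -, hglb, hev⟩ := h
  by_contra! hlt
  have hb_lower : b ∈ lowerBounds (range z) := by
    rintro _ ⟨μ, rfl⟩
    exact (hlt (z μ) (hev μ)).le
  exact (hglb.2 hb_lower).not_gt hb

variable [IsOrderedAddMonoid X]

theorem nonneg_of_eventually_abs_sub_le {z : X} (hz : ∀ᶠ n in atTop, |x n - x₀| ≤ z) :
    0 ≤ z :=
  let ⟨_, hn⟩ := hz.exists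
  (abs_nonneg _).trans hn

theorem sigmaOrderConvergesTo_of_isGLB_nat (z : ℕ → X)
    (hz : ∀ m, ∀ᶠ n in atTop, |x n - x₀| ≤ z m) (hglb : IsGLB (range z) 0) :
    SigmaOrderConvergesTo x x₀ := by
  let y : ℕ → X := fun m => (Finset.Iic m).inf' Finset.nonempty_Iic z
  have hyz : ∀ m, y m ≤ z m := fun m => Finset.inf'_le z (Finset.mem_Iic.2 le_rfl)
  have hy : ∀ m, ∀ᶠ n in atTop, |x n - x₀| ≤ y m := fun m => by
    filter_upwards [(eventually_all_finset _).2 fun k _ => hz k] with n hn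
    exact Finset.le_inf' _ _ hn
  refine ⟨y, fun _ _ hab => Finset.inf'_mono z (Finset.Iic_subset_Iic.2 hab) _, ⟨?_, ?_⟩, hy⟩
  · rintro _ ⟨m, rfl⟩
    exact nonneg_of_eventually_abs_sub_le (hy m)
  · intro c hc
    exact hglb.2 <| by
      rintro _ ⟨m, rfl⟩
      exact (hc ⟨m, rfl⟩).trans (hyz m)

theorem sigmaOrderConvergesTo_of_isGLB {ι : Type*} [Countable ι] (z : ι → X)
    (hz : ∀ i, ∀ᶠ n in atTop, |x n - x₀| ≤ z i) (hglb : IsGLB (range z) 0) :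
    SigmaOrderConvergesTo x x₀ := by
  cases isEmpty_or_nonempty ι with
  | inl _ =>
    have htop : IsTop (0 : X) := isGLB_empty_iff.1 (range_eq_empty z ▸ hglb)
    refine ⟨fun _ => 0, antitone_const, ?_, fun _ => Eventually.of_forall fun _ => htop _⟩
    rw [range_const]
    exact isGLB_singleton
  | inr _ =>
    obtain ⟨f, hf⟩ := exists_surjective_nat ι
    exact sigmaOrderConvergesTo_of_isGLB_nat (z ∘ f) (fun m => hz (f m))
      (by rwa [hf.range_comp])

end LatticeGroup

theorem isGLB_range_zero_of_exists_not_lt {X ι : Type*} [Lattice X] [Zero X] {B : Set X}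
    (hBpi : ∀ x : X, 0 < x → ∃ b ∈ B, b < x) (z : ι → X) (hz0 : ∀ i, 0 ≤ z i)
    (hzB : ∀ b ∈ B, ∃ i, ¬ b < z i) : IsGLB (range z) 0 := by
  refine ⟨by rintro _ ⟨i, rfl⟩; exact hz0 i, fun c hc => ?_⟩
  by_contra hc0
  obtain ⟨b, hbB, hbc⟩ := hBpi (c ⊔ 0) (right_lt_sup.2 hc0)
  obtain ⟨i, hi⟩ := hzB b hbB
  exact hi (hbc.trans_le (sup_le (hc ⟨i, rfl⟩) (hz0 i)))

theorem orderConv_iff_sigmaOrderConv_iff_piBasis_criterion_general {X : Type u}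
    [NormedAddCommGroup X] [Lattice X] [IsOrderedAddMonoid X]
    (B : Set X) (hBc : B.Countable) (hBpos : ∀ b ∈ B, 0 < b)
    (hBpi : ∀ x : X, 0 < x → ∃ b ∈ B, b < x)
    (x : ℕ → X) (x₀ : X) :
    (OrderConvergesTo x x₀ ↔ SigmaOrderConvergesTo x x₀) ∧
      (SigmaOrderConvergesTo x x₀ ↔
        ∀ b ∈ B, ∃ z : X, (∀ᶠ n in atTop, |x n - x₀| ≤ z) ∧ ¬ b < z) := by
  have criterion_of_order (h : OrderConvergesTo x x₀) :
      ∀ b ∈ B, ∃ z : X, (∀ᶠ n in atTop, |x n - x₀| ≤ z) ∧ ¬ b < z := fun b hb =>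
    h.exists_eventually_abs_sub_le_not_lt (hBpos b hb)
  have sigma_of_criterion
      (h : ∀ b ∈ B, ∃ z : X, (∀ᶠ n in atTop, |x n - x₀| ≤ z) ∧ ¬ b < z) :
      SigmaOrderConvergesTo x x₀ := by
    choose z hz hzb using h
    have : Countable B := hBc.to_subtype
    refine sigmaOrderConvergesTo_of_isGLB (fun b : B => z b b.2) (fun b => hz b b.2) ?_
    exact isGLB_range_zero_of_exists_not_lt hBpi _
      (fun b => nonneg_of_eventually_abs_sub_le (hz b b.2)) fun b hb => ⟨⟨b, hb⟩, hzb b hb⟩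
  exact ⟨⟨fun h => sigma_of_criterion (criterion_of_order h),
      SigmaOrderConvergesTo.orderConvergesTo⟩,
    ⟨fun h => criterion_of_order h.orderConvergesTo, sigma_of_criterion⟩⟩

/-- In a Banach lattice with a countable π-basis `B`, the following are
equivalent for a sequence `(x n)` and a vector `x₀`: (i) order convergence to `x₀`;
(ii) σ-order convergence to `x₀`; (iii) for every `b ∈ B` there is `z` eventually
dominating `|x n − x₀|` with `¬ b < z`. -/
theorem orderConv_iff_sigmaOrderConv_iff_piBasis_criterion {X : Type u}
    [NormedAddCommGroup X] [Lattice X] [HasSolidNorm X] [IsOrderedAddMonoid X]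
    [NormedSpace ℝ X] [CompleteSpace X]
    (B : Set X) (hBc : B.Countable) (hBpos : ∀ b ∈ B, 0 < b)
    (hBpi : ∀ x : X, 0 < x → ∃ b ∈ B, b < x)
    (x : ℕ → X) (x₀ : X) :
    (OrderConvergesTo x x₀ ↔ SigmaOrderConvergesTo x x₀) ∧
      (SigmaOrderConvergesTo x x₀ ↔
        ∀ b ∈ B, ∃ z : X, (∀ᶠ n in atTop, |x n - x₀| ≤ z) ∧ ¬ b < z) :=
  orderConv_iff_sigmaOrderConv_iff_piBasis_criterion_general B hBc hBpos hBpi x x₀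
end

section
/- Let (e_n, e_n^♯) be a biorthogonal system in a Banach space X with X = closed span of (e_n), and suppose there is a filter 𝓕 (proper, containing all cofinite sets) such that (e_n) is an 𝓕-basis with coordinates e_n^♯. If the sequence (e_n) is minimal (i.e., e_k ∉ closed span of {e_n : n ≠ k} for all k), then every functional e_k^♯ is continuous. -/
open Filter

/-- Let `(e n, f n)` be a biorthogonal system in a Banach space `X` with
`X` the closed span of `(e n)`, and suppose `F` is a proper filter containing all cofinite
sets such that `(e n)` is an `F`-basis with coordinates `(f n)`. If `(e n)` is minimal,
then every `f k` is continuous. -/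
theorem filter_basis_minimal_implies_continuous {X : Type*} [NormedAddCommGroup X]
    [NormedSpace ℝ X] [CompleteSpace X]
    (e : ℕ → X) (f : ℕ → X →ₗ[ℝ] ℝ)
    (hbi : ∀ k n, f k (e n) = if k = n then 1 else 0)
    (hspan : (Submodule.span ℝ (Set.range e)).topologicalClosure = ⊤)
    (F : Filter ℕ) (hproper : F.NeBot) (hcof : F ≤ Filter.cofinite)
    (hFbasis : ∀ x : X,
      Tendsto (fun m => ∑ n ∈ Finset.range m, f n x • e n) F (nhds x))
    (huniq : ∀ (x : X) (a : ℕ → ℝ),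
      Tendsto (fun m => ∑ n ∈ Finset.range m, a n • e n) F (nhds x) →
        ∀ k, a k = f k x)
    (hmin : ∀ k : ℕ, e k ∉ closure
      ((Submodule.span ℝ (e '' {n : ℕ | n ≠ k}) : Submodule ℝ X) : Set X)) :
    ∀ k, Continuous (f k) := by
  intro k
  -- kernel of f k is contained in the closure of the span of the other vectors
  have hker : (LinearMap.ker (f k) : Set X) ⊆
      closure ((Submodule.span ℝ (e '' {n : ℕ | n ≠ k}) : Submodule ℝ X) : Set X) := by
    intro x hx
    have hx0 : f k x = 0 := hx
    refine mem_closure_of_tendsto (hFbasis x) (Eventually.of_forall fun m => ?_)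
    refine Submodule.sum_mem _ fun n _ => ?_
    by_cases hnk : n = k
    · subst hnk
      rw [hx0, zero_smul]
      exact Submodule.zero_mem _
    · exact Submodule.smul_mem _ _ (Submodule.subset_span ⟨n, hnk, rfl⟩)
  rcases LinearMap.isClosed_or_dense_ker (f k) with hclosed | hdense
  · exact (LinearMap.continuous_iff_isClosed_ker (f k)).mpr hclosed
  · exfalso
    apply hmin k
    have : closure (LinearMap.ker (f k) : Set X) ⊆
        closure ((Submodule.span ℝ (e '' {n : ℕ | n ≠ k}) : Submodule ℝ X) : Set X) := by
      simpa [closure_closure] using closure_mono hker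
    exact this (hdense.closure_eq ▸ Set.mem_univ (e k))
end

section
/- Let (e_n, e_n^♯) be a biorthogonal system in a Banach space X admitting at least one compatible filter. Define 𝓐 = { a ⊆ ℕ : there exist finitely many x_1,…,x_m ∈ X and ε > 0 with ⋂_{i=1}^m θ(x_i, Ex_i, ε) ⊆ a }, where θ(x, (a_n), ε) = { m ∈ ℕ : ‖x − ∑_{n=1}^m a_n e_n‖ < ε } and Ex = (e_n^♯(x))_n. Then 𝓐 is a filter compatible with (e_n, e_n^♯) and 𝓐 is contained in every compatible filter; i.e., 𝓐 is the smallest compatible filter. -/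
open Filter

variable {X : Type*} [NormedAddCommGroup X] [NormedSpace ℝ X]

/-- `θ(x, a, ε) = { m : ‖x − ∑_{n<m} a n • e n‖ < ε }`. -/
def thetaSet (e : ℕ → X) (x : X) (a : ℕ → ℝ) (ε : ℝ) : Set ℕ :=
  {m : ℕ | ‖x - ∑ n ∈ Finset.range m, a n • e n‖ < ε}

/-- `G` is a filter on `ℕ` (proper, containing all cofinite sets) compatible with the
biorthogonal system `(e n, f n)`: all sets `θ(x, Ex, ε)` belong to `G`, and for every
nonzero scalar sequence `a` some `θ(0, a, 1/k)` does not belong to `G`. -/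
def IsCompatibleFilter (e : ℕ → X) (f : ℕ → X →ₗ[ℝ] ℝ) (G : Set (Set ℕ)) : Prop :=
  (∀ a ∈ G, ∀ b : Set ℕ, a ⊆ b → b ∈ G) ∧
  (∀ a ∈ G, ∀ b ∈ G, a ∩ b ∈ G) ∧
  (∅ : Set ℕ) ∉ G ∧
  (∀ a : Set ℕ, (aᶜ).Finite → a ∈ G) ∧
  (∀ (x : X) (ε : ℝ), 0 < ε → thetaSet e x (fun n => f n x) ε ∈ G) ∧
  (∀ a : ℕ → ℝ, a ≠ 0 → ∃ k : ℕ, 1 ≤ k ∧ thetaSet e 0 a (k : ℝ)⁻¹ ∉ G)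

/-- If the biorthogonal system `(e n, f n)` admits a compatible filter, then
`𝓐 = { a : ⋂_{i≤m} θ(x i, E (x i), ε) ⊆ a for some finitely many x i and ε > 0 }` is a
compatible filter contained in every compatible filter, i.e. the smallest one. -/
theorem smallest_compatible_filter [CompleteSpace X]
    (e : ℕ → X) (f : ℕ → X →ₗ[ℝ] ℝ)
    (hbi : ∀ k n, f k (e n) = if k = n then 1 else 0)
    (hexists : ∃ G : Set (Set ℕ), IsCompatibleFilter e f G)
    (A : Set (Set ℕ))
    (hA : A = {a : Set ℕ | ∃ (m : ℕ) (x : Fin (m + 1) → X) (ε : ℝ), 0 < ε ∧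
      (⋂ i, thetaSet e (x i) (fun n => f n (x i)) ε) ⊆ a}) :
    IsCompatibleFilter e f A ∧ ∀ G : Set (Set ℕ), IsCompatibleFilter e f G → A ⊆ G := by
  have theta_mono : ∀ (x : X) (a : ℕ → ℝ) {ε ε' : ℝ}, ε ≤ ε' →
      thetaSet e x a ε ⊆ thetaSet e x a ε' := fun x a ε ε' h m hm => lt_of_lt_of_le hm h
  -- A is contained in every compatible filter
  have key : ∀ G : Set (Set ℕ), IsCompatibleFilter e f G → A ⊆ G := by
    intro G hG a ha
    obtain ⟨hup, hint, hne, hcof, htheta, hnz⟩ := hG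
    rw [hA] at ha
    obtain ⟨m, x, ε, hε, hsub⟩ := ha
    let F : Filter ℕ :=
      { sets := G
        univ_sets := hcof Set.univ (by simp)
        sets_of_superset := fun h hsub => hup _ h _ hsub
        inter_sets := fun h1 h2 => hint _ h1 _ h2 }
    have : (⋂ i, thetaSet e (x i) (fun n => f n (x i)) ε) ∈ F := by
      rw [Filter.iInter_mem]
      exact fun i => htheta (x i) ε hε
    exact hup _ this _ hsub
  obtain ⟨G, hG⟩ := hexists
  refine ⟨⟨?_, ?_, ?_, ?_, ?_, ?_⟩, key⟩
  · -- upward closed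
    intro a ha b hsub
    rw [hA] at ha ⊢
    obtain ⟨m, x, ε, hε, h⟩ := ha
    exact ⟨m, x, ε, hε, h.trans hsub⟩
  · -- closed under intersection
    intro a ha b hb
    rw [hA] at ha hb ⊢
    obtain ⟨m₁, x, ε₁, hε₁, hx⟩ := ha
    obtain ⟨m₂, y, ε₂, hε₂, hy⟩ := hb
    refine ⟨m₁ + m₂ + 1,
      fun i => if h : (i : ℕ) ≤ m₁ then x ⟨i, by omega⟩ else y ⟨(i : ℕ) - (m₁ + 1), by omega⟩,
      min ε₁ ε₂, lt_min hε₁ hε₂, ?_⟩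
    intro m' hm'
    rw [Set.mem_iInter] at hm'
    constructor
    · apply hx
      rw [Set.mem_iInter]
      intro i
      have h1 := hm' ⟨(i : ℕ), by omega⟩
      simp only [dif_pos (Nat.lt_succ_iff.mp i.isLt)] at h1
      have hxe : (⟨(i : ℕ), i.isLt⟩ : Fin (m₁ + 1)) = i := rfl
      rw [hxe] at h1
      exact theta_mono _ _ (min_le_left _ _) h1
    · apply hy
      rw [Set.mem_iInter]
      intro i
      have h1 := hm' ⟨m₁ + 1 + (i : ℕ), by omega⟩
      have hnle : ¬ (m₁ + 1 + (i : ℕ) ≤ m₁) := by omega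
      simp only [dif_neg hnle] at h1
      have hye : (⟨m₁ + 1 + (i : ℕ) - (m₁ + 1), by omega⟩ : Fin (m₂ + 1)) = i := by
        apply Fin.ext; simp
      rw [hye] at h1
      exact theta_mono _ _ (min_le_right _ _) h1
  · -- ∅ ∉ A
    intro h
    exact hG.2.2.1 (key G hG h)
  · -- cofinite sets
    intro a hfin
    rw [hA]
    obtain ⟨N, hN⟩ := hfin.bddAbove
    have he0 : ∀ i : ℕ, e i ≠ 0 := by
      intro i h0
      have := hbi i i
      rw [h0, if_pos rfl, map_zero] at this
      exact one_ne_zero this.symm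
    have hnonempty : (Finset.range (N + 1)).Nonempty := ⟨0, by simp⟩
    refine ⟨N, fun i => e i, (Finset.range (N + 1)).inf' hnonempty (fun i => ‖e i‖), ?_, ?_⟩
    · rw [Finset.lt_inf'_iff]
      intro i _
      exact norm_pos_iff.mpr (he0 i)
    · intro m hm
      by_contra hma
      have hmN : m ≤ N := hN hma
      rw [Set.mem_iInter] at hm
      have h1 := hm ⟨m, by omega⟩
      have hsum : ∑ n ∈ Finset.range m, f n (e m) • e n = 0 := by
        apply Finset.sum_eq_zero
        intro n hn
        rw [hbi n m, if_neg (Finset.mem_range.mp hn).ne, zero_smul]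
      simp only [thetaSet, Set.mem_setOf_eq, hsum, sub_zero] at h1
      have h2 : (Finset.range (N + 1)).inf' hnonempty (fun i => ‖e i‖) ≤ ‖e m‖ :=
        Finset.inf'_le _ (Finset.mem_range.mpr (by omega))
      exact absurd h1 (not_lt.mpr h2)
  · -- θ sets belong to A
    intro x ε hε
    rw [hA]
    exact ⟨0, fun _ => x, ε, hε, Set.iInter_subset _ 0⟩
  · -- nonzero sequences
    intro a ha
    obtain ⟨k, hk, hknot⟩ := hG.2.2.2.2.2 a ha
    exact ⟨k, hk, fun h => hknot (key G hG h)⟩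
end

section
/- Let (e_n) be a sequence in a Banach space X, 𝓕 an analytic filter on ℕ (as a subset of the Cantor space ℘(ℕ) = {0,1}^ℕ) compatible with the biorthogonal system (e_n, e_n^♯), and E : X → ℝ^ℕ the map Ex = (e_n^♯(x)). Then the graph of E, namely { (x,(a_n)) : for all k ∈ ℕ, {m : ‖x − ∑_{n=1}^m a_n e_n‖ < 1/k} ∈ 𝓕 }, is an analytic subset of X × ℝ^ℕ; consequently E is Borel measurable, hence continuous. -/
open Filter MeasureTheory

variable {X : Type*} [NormedAddCommGroup X] [NormedSpace ℝ X]

/-- The characteristic function identifying `℘(ℕ)` with the Cantor space `ℕ → Bool`. -/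
noncomputable def chi (s : Set ℕ) : ℕ → Bool := fun n =>
  @decide (n ∈ s) (Classical.propDecidable _)

/-!
Compatibility makes `𝓕`-limits of partial sums `∑_{n<m} a n • e n` unique and makes `E x` such
a limit of `x`, so the displayed set is exactly the graph of `E`. Since `θ(x, a, ε)` depends
Borel-measurably on `(x, a)`, the graph is a countable intersection of Borel preimages of the
analytic set `𝓕`, hence analytic. A map between Polish spaces with analytic graph is Borel: the
preimages of a Borel set and of its complement are both analytic, so Lusin separation applies.
Finally each coordinate `f n` is a Borel additive map on a Baire space, hence continuous by
Pettis' theorem: some preimage `A` of a closed ball is non-meagre, `A - A` is then a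
neighbourhood of `0`, and `f n` is bounded there.
-/

open Set Topology Metric
open scoped Pointwise

theorem BaireMeasurableSet.sub_mem_nhds_zero {G : Type*} [TopologicalSpace G] [AddCommGroup G]
    [IsTopologicalAddGroup G] [BaireSpace G] {A : Set G} (hA : BaireMeasurableSet A)
    (hA' : ¬IsMeagre A) : A - A ∈ 𝓝 0 := by
  obtain ⟨U, hUo, hAU⟩ := hA.residualEq_isOpen
  obtain ⟨u, hu⟩ : U.Nonempty := by
    refine U.eq_empty_or_nonempty.resolve_left fun hU => hA' ?_
    subst hU
    exact eventuallyEq_empty.1 hAU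
  have hnhds : (u + ·) ⁻¹' U ∈ 𝓝 0 :=
    (continuous_const_add u).continuousAt.preimage_mem_nhds (by simpa using hUo.mem_nhds hu)
  filter_upwards [hnhds] with x hx
  -- `A` is comeagre in the nonempty open set `U ∩ (U + x)`, and so is its translate `A + x`.
  have hshift : (· - x) ⁻¹' A =ᵇ (· - x) ⁻¹' U :=
    hAU.comp_tendsto <|
      tendsto_residual_of_isOpenMap (continuous_sub_right x) (isOpenMap_sub_right x)
  obtain ⟨y, ⟨hyU, hyxU⟩, hyA, hyxA⟩ :=
    (dense_of_mem_residual (hAU.and hshift)).inter_open_nonempty (U ∩ (· - x) ⁻¹' U)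
      (hUo.inter (hUo.preimage (continuous_sub_right x))) ⟨u + x, hx, by simpa using hu⟩
  exact ⟨y, hyA.mpr hyU, y - x, hyxA.mpr hyxU, sub_sub_cancel y x⟩

theorem AddMonoidHom.continuous_of_measurable_of_baireSpace {G H : Type*}
    [SeminormedAddCommGroup G] [BaireSpace G] [MeasurableSpace G] [BorelSpace G]
    [SeminormedAddCommGroup H] [NormedSpace ℝ H] [MeasurableSpace H] [OpensMeasurableSpace H]
    (f : G →+ H) (hf : Measurable f) : Continuous f := by
  obtain ⟨n, hn⟩ : ∃ n : ℕ, ¬IsMeagre (f ⁻¹' closedBall 0 n) := by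
    by_contra! h
    have := isMeagre_iUnion h
    rw [← preimage_iUnion, iUnion_closedBall_nat, preimage_univ] at this
    exact not_isMeagre_of_isOpen isOpen_univ univ_nonempty this
  refine f.continuous_of_isBounded_nhds_zero
    ((hf measurableSet_closedBall).baireMeasurableSet.sub_mem_nhds_zero hn)
    (isBounded_closedBall (x := 0) (r := n + n) |>.subset ?_)
  rintro _ ⟨_, ⟨a, ha, b, hb, rfl⟩, rfl⟩
  simp only [mem_preimage, mem_closedBall, dist_zero_right] at ha hb ⊢
  exact map_sub f a b ▸ (norm_sub_le _ _).trans (add_le_add ha hb)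

theorem MeasureTheory.AnalyticSet.inter {α : Type*} [TopologicalSpace α] [T2Space α] {s t : Set α}
    (hs : AnalyticSet s) (ht : AnalyticSet t) : AnalyticSet (s ∩ t) := by
  rw [inter_eq_iInter]
  exact AnalyticSet.iInter fun b => by cases b <;> assumption

theorem MeasureTheory.AnalyticSet.preimage_of_measurable {α β : Type*} [t : TopologicalSpace α]
    [PolishSpace α] [MeasurableSpace α] [BorelSpace α] [TopologicalSpace β] [T2Space β]
    [SecondCountableTopology β] [MeasurableSpace β] [OpensMeasurableSpace β]
    {s : Set β} (hs : AnalyticSet s) {f : α → β} (hf : Measurable f) :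
    AnalyticSet (f ⁻¹' s) := by
  -- A finer Polish topology makes `f` continuous and has the same analytic sets.
  obtain ⟨t', ht', hcont, hpolish⟩ := hf.exists_continuous
  simpa using @AnalyticSet.image_of_continuous α t' α t _
    (@AnalyticSet.preimage α β t' _ hpolish _ s hs f hcont) id (continuous_id_of_le ht')

theorem measurable_of_analyticSet_graph {α β : Type*} [TopologicalSpace α] [PolishSpace α]
    [MeasurableSpace α] [BorelSpace α] [TopologicalSpace β] [PolishSpace β] [MeasurableSpace β]
    [BorelSpace β] {f : α → β} (hf : AnalyticSet {p : α × β | p.2 = f p.1}) : Measurable f := by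
  have hpre : ∀ C : Set β, MeasurableSet C → AnalyticSet (f ⁻¹' C) := fun C hC => by
    have : f ⁻¹' C = Prod.fst '' ({p : α × β | p.2 = f p.1} ∩ Prod.snd ⁻¹' C) := by
      ext x; simp
    rw [this]
    exact (hf.inter (hC.analyticSet.preimage continuous_snd)).image_of_continuous continuous_fst
  exact fun C hC => (hpre C hC).measurableSet_of_compl (hpre Cᶜ hC.compl)

theorem measurable_chi_comp {α : Type*} [MeasurableSpace α] {g : α → Set ℕ}
    (hg : ∀ m, MeasurableSet {a | m ∈ g a}) : Measurable fun a => chi (g a) :=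
  measurable_pi_lambda _ fun m => measurable_to_bool (by convert hg m; ext; simp [chi])

theorem measurable_chi_thetaSet [MeasurableSpace X] [BorelSpace X] [SecondCountableTopology X]
    (e : ℕ → X) (ε : ℝ) :
    Measurable fun p : X × (ℕ → ℝ) => chi (thetaSet e p.1 p.2 ε) :=
  measurable_chi_comp fun m =>
    (isOpen_lt (f := fun p : X × (ℕ → ℝ) => ‖p.1 - ∑ n ∈ Finset.range m, p.2 n • e n‖)
      (by fun_prop) continuous_const).measurableSet

theorem analyticSet_setOf_forall_chi_thetaSet_mem [CompleteSpace X] [SecondCountableTopology X]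
    (e : ℕ → X) {F : Set (ℕ → Bool)} (hF : AnalyticSet F) (ε : ℕ → ℝ) :
    AnalyticSet {p : X × (ℕ → ℝ) | ∀ k, chi (thetaSet e p.1 p.2 (ε k)) ∈ F} := by
  borelize X
  rw [ofPred_forall]
  exact AnalyticSet.iInter fun k => hF.preimage_of_measurable (measurable_chi_thetaSet e (ε k))

theorem thetaSet_inter_subset_thetaSet_sub (e : ℕ → X) (x : X) (a b : ℕ → ℝ) {ε δ η : ℝ}
    (h : ε + δ ≤ η) : thetaSet e x a ε ∩ thetaSet e x b δ ⊆ thetaSet e 0 (b - a) η := by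
  rintro m ⟨ha, hb⟩
  have hdiff : 0 - ∑ n ∈ Finset.range m, (b - a) n • e n
      = (x - ∑ n ∈ Finset.range m, b n • e n) - (x - ∑ n ∈ Finset.range m, a n • e n) := by
    simp only [Pi.sub_apply, sub_smul, Finset.sum_sub_distrib]
    abel
  calc ‖0 - ∑ n ∈ Finset.range m, (b - a) n • e n‖
      ≤ ‖x - ∑ n ∈ Finset.range m, b n • e n‖ + ‖x - ∑ n ∈ Finset.range m, a n • e n‖ :=
        hdiff ▸ norm_sub_le _ _
    _ < δ + ε := add_lt_add hb ha
    _ ≤ η := by linarith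

theorem eq_of_chi_thetaSet_mem (e : ℕ → X) {F : Set (ℕ → Bool)}
    (hup : ∀ s t : Set ℕ, chi s ∈ F → s ⊆ t → chi t ∈ F)
    (hinter : ∀ s t : Set ℕ, chi s ∈ F → chi t ∈ F → chi (s ∩ t) ∈ F)
    (hsep : ∀ c : ℕ → ℝ, c ≠ 0 → ∃ k : ℕ, 1 ≤ k ∧ chi (thetaSet e 0 c (k : ℝ)⁻¹) ∉ F)
    {x : X} {a b : ℕ → ℝ} (ha : ∀ k : ℕ, chi (thetaSet e x a ((k : ℝ) + 1)⁻¹) ∈ F)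
    (hb : ∀ ε, 0 < ε → chi (thetaSet e x b ε) ∈ F) : a = b := by
  by_contra hne
  obtain ⟨k, hk, hkF⟩ := hsep (b - a) (sub_ne_zero.2 (Ne.symm hne))
  have hsum : ((2 * k : ℕ) + 1 : ℝ)⁻¹ + ((2 * k : ℕ) + 1 : ℝ)⁻¹ ≤ (k : ℝ)⁻¹ := by
    rw [← two_mul, ← div_eq_mul_inv, div_le_iff₀ (by positivity)]
    push_cast
    field_simp
    linarith
  exact hkF <| hup _ _ (hinter _ _ (ha (2 * k)) (hb _ (by positivity)))
    (thetaSet_inter_subset_thetaSet_sub e x a b hsum)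

theorem analytic_filter_graph_analytic_continuous_general
    [CompleteSpace X] [SecondCountableTopology X]
    [MeasurableSpace X] [BorelSpace X]
    (e : ℕ → X) (f : ℕ → X →ₗ[ℝ] ℝ)
    (F : Set (ℕ → Bool)) (hFanalytic : AnalyticSet F)
    (hfilter : (∀ s t : Set ℕ, chi s ∈ F → s ⊆ t → chi t ∈ F) ∧
      (∀ s t : Set ℕ, chi s ∈ F → chi t ∈ F → chi (s ∩ t) ∈ F) ∧
      chi (∅ : Set ℕ) ∉ F ∧ (∀ s : Set ℕ, (sᶜ).Finite → chi s ∈ F))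
    (hcompat₁ : ∀ (x : X) (ε : ℝ), 0 < ε → chi (thetaSet e x (fun n => f n x) ε) ∈ F)
    (hcompat₂ : ∀ a : ℕ → ℝ, a ≠ 0 → ∃ k : ℕ, 1 ≤ k ∧
      chi (thetaSet e 0 a (k : ℝ)⁻¹) ∉ F) :
    AnalyticSet {p : X × (ℕ → ℝ) |
        ∀ k : ℕ, chi (thetaSet e p.1 p.2 ((k : ℝ) + 1)⁻¹) ∈ F} ∧
      Measurable (fun x : X => (fun n => f n x : ℕ → ℝ)) ∧
      Continuous (fun x : X => (fun n => f n x : ℕ → ℝ)) := by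
  obtain ⟨hup, hinter, -, -⟩ := hfilter
  set E : X → ℕ → ℝ := fun x n => f n x
  have hanalytic := analyticSet_setOf_forall_chi_thetaSet_mem e hFanalytic fun k => ((k : ℝ) + 1)⁻¹
  have hgraph : {p : X × (ℕ → ℝ) | ∀ k : ℕ, chi (thetaSet e p.1 p.2 ((k : ℝ) + 1)⁻¹) ∈ F} =
      {p | p.2 = E p.1} := by
    ext ⟨x, a⟩
    refine ⟨fun ha => eq_of_chi_thetaSet_mem e hup hinter hcompat₂ ha (hcompat₁ x), ?_⟩
    rintro (rfl : a = E x) k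
    exact hcompat₁ x _ (by positivity)
  have hmeas : Measurable E := measurable_of_analyticSet_graph (hgraph ▸ hanalytic)
  refine ⟨hanalytic, hmeas, continuous_pi fun n => ?_⟩
  exact (f n).toAddMonoidHom.continuous_of_measurable_of_baireSpace
    ((measurable_pi_apply n).comp hmeas)

/-- If `𝓕` is an analytic filter on `ℕ` (as a subset of the Cantor space)
compatible with the biorthogonal system `(e n, f n)` of a separable Banach space `X`,
then the graph of `E x = (f n x)ₙ`, namely
`{ (x, a) : ∀ k, θ(x, a, 1/(k+1)) ∈ 𝓕 }`, is analytic; consequently `E` is Borel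
measurable, hence continuous. -/
theorem analytic_filter_graph_analytic_continuous
    [CompleteSpace X] [SecondCountableTopology X]
    [MeasurableSpace X] [BorelSpace X]
    (e : ℕ → X) (f : ℕ → X →ₗ[ℝ] ℝ)
    (hbi : ∀ k n, f k (e n) = if k = n then 1 else 0)
    (F : Set (ℕ → Bool)) (hFanalytic : AnalyticSet F)
    (hfilter : (∀ s t : Set ℕ, chi s ∈ F → s ⊆ t → chi t ∈ F) ∧
      (∀ s t : Set ℕ, chi s ∈ F → chi t ∈ F → chi (s ∩ t) ∈ F) ∧
      chi (∅ : Set ℕ) ∉ F ∧ (∀ s : Set ℕ, (sᶜ).Finite → chi s ∈ F))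
    (hcompat₁ : ∀ (x : X) (ε : ℝ), 0 < ε → chi (thetaSet e x (fun n => f n x) ε) ∈ F)
    (hcompat₂ : ∀ a : ℕ → ℝ, a ≠ 0 → ∃ k : ℕ, 1 ≤ k ∧
      chi (thetaSet e 0 a (k : ℝ)⁻¹) ∉ F) :
    AnalyticSet {p : X × (ℕ → ℝ) |
        ∀ k : ℕ, chi (thetaSet e p.1 p.2 ((k : ℝ) + 1)⁻¹) ∈ F} ∧
      Measurable (fun x : X => (fun n => f n x : ℕ → ℝ)) ∧
      Continuous (fun x : X => (fun n => f n x : ℕ → ℝ)) :=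
  analytic_filter_graph_analytic_continuous_general e f F hFanalytic hfilter hcompat₁ hcompat₂
end

section
/- Let (e_n) be a sequence in a Banach space X with continuous biorthogonal functionals e_n^♯ defining the smallest compatible filter 𝓐 = { a ⊆ ℕ : ⋂_{i=1}^m θ(x_i, Ex_i, ε) ⊆ a for some x_1,…,x_m ∈ X and ε > 0 }. Then 𝓐 is an analytic subset of ℘(ℕ) = {0,1}^ℕ. -/
open Filter MeasureTheory

variable {X : Type*} [NormedAddCommGroup X] [NormedSpace ℝ X]

/-! A set `a` belongs to `𝓐` iff some parameter `(x₁, …, xₘ, ε)`, ranging over the Polish space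
`Σ m, Xᵐ × (0, ∞)`, satisfies `⋂ᵢ θ(xᵢ, Exᵢ, ε) ⊆ a`. Membership `n ∈ ⋂ᵢ θ(xᵢ, Exᵢ, ε)` is an
open condition on the parameter, so this relation between parameters and points of the Cantor
space is closed, and `𝓐` is its projection to the Cantor space. -/

theorem chi_setOf_eq_true (t : ℕ → Bool) : chi {n | t n = true} = t := by
  funext n
  simp [chi]

theorem image_chi_setOf (P : Set ℕ → Prop) : chi '' {a | P a} = {t | P {n | t n = true}} := by
  ext t
  constructor
  · rintro ⟨a, ha, rfl⟩
    simpa [chi] using ha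
  · intro ht
    exact ⟨_, ht, chi_setOf_eq_true t⟩

theorem analyticSet_setOf_exists_forall_mem {ι Y : Type*} [Countable ι] [TopologicalSpace Y]
    [PolishSpace Y] (U : Y → Set ι) (hU : ∀ i, IsOpen {y | i ∈ U y}) :
    AnalyticSet {t : ι → Bool | ∃ y, ∀ i ∈ U y, t i = true} := by
  have hclosed : IsClosed {p : Y × (ι → Bool) | ∀ i ∈ U p.1, p.2 i = true} := by
    simp only [Set.ofPred_forall]
    exact isClosed_iInter fun i => isClosed_imp ((hU i).preimage continuous_fst)
      (isClosed_eq (by fun_prop) continuous_const)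
  -- instance search does not reach `PolishSpace (Y × (ι → Bool))` without this intermediate step
  have : PolishSpace Bool := inferInstance
  convert hclosed.analyticSet.image_of_continuous continuous_snd
  ext t
  simp

theorem isOpen_setOf_mem_thetaSet (e : ℕ → X) {a : X → ℕ → ℝ}
    (ha : ∀ k, Continuous fun x => a x k) (n : ℕ) :
    IsOpen {p : X × ℝ | n ∈ thetaSet e p.1 (a p.1) p.2} :=
  isOpen_lt (by fun_prop) continuous_snd

theorem isOpen_setOf_mem_iInter_thetaSet (e : ℕ → X) (f : ℕ → X →L[ℝ] ℝ) (n : ℕ) :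
    IsOpen {y : Σ m : ℕ, (Fin (m + 1) → X) × Set.Ioi (0 : ℝ) |
      n ∈ ⋂ i, thetaSet e (y.2.1 i) (fun k => f k (y.2.1 i)) y.2.2} := by
  refine isOpen_sigma_iff.2 fun m => ?_
  simp only [Set.preimage_ofPred_eq, Set.mem_iInter, Set.ofPred_forall]
  exact isOpen_iInter_of_finite fun i =>
    (isOpen_setOf_mem_thetaSet e (fun k => (f k).continuous) n).preimage
      (f := fun p : (Fin (m + 1) → X) × Set.Ioi (0 : ℝ) => (p.1 i, (p.2 : ℝ))) (by fun_prop)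

theorem smallest_compatible_filter_analytic_general
    [CompleteSpace X] [SecondCountableTopology X]
    (e : ℕ → X) (f : ℕ → X →L[ℝ] ℝ)
    (A : Set (ℕ → Bool))
    (hA : A = chi '' {a : Set ℕ | ∃ (m : ℕ) (x : Fin (m + 1) → X) (ε : ℝ), 0 < ε ∧
      (⋂ i, thetaSet e (x i) (fun n => f n (x i)) ε) ⊆ a}) :
    AnalyticSet A := by
  have : PolishSpace (Set.Ioi (0 : ℝ)) := isOpen_Ioi.polishSpace
  convert analyticSet_setOf_exists_forall_mem _ (isOpen_setOf_mem_iInter_thetaSet e f)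
  rw [hA, image_chi_setOf]
  ext t
  simp only [Set.mem_ofPred_eq, Set.subset_def, Sigma.exists, Prod.exists, Subtype.exists,
    Set.mem_Ioi, exists_prop]

/-- For a sequence `(e n)` in a separable Banach space `X` with continuous
biorthogonal functionals `(f n)`, the smallest compatible filter
`𝓐 = { a : ⋂_{i} θ(x i, E (x i), ε) ⊆ a for some finitely many x i and ε > 0 }` is an
analytic subset of the Cantor space `℘(ℕ) = {0,1}^ℕ`. -/
theorem smallest_compatible_filter_analytic
    [CompleteSpace X] [SecondCountableTopology X]
    (e : ℕ → X) (f : ℕ → X →L[ℝ] ℝ)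
    (hbi : ∀ k n, f k (e n) = if k = n then 1 else 0)
    (A : Set (ℕ → Bool))
    (hA : A = chi '' {a : Set ℕ | ∃ (m : ℕ) (x : Fin (m + 1) → X) (ε : ℝ), 0 < ε ∧
      (⋂ i, thetaSet e (x i) (fun n => f n (x i)) ε) ⊆ a}) :
    AnalyticSet A :=
  smallest_compatible_filter_analytic_general e f A hA
end

section
/- Let (e_n) be a sequence in a Banach space X and 𝓕 a Borel filter on ℕ (as a subset of {0,1}^ℕ) such that (e_n) is an 𝓕-basis for X with continuous coordinate functionals, and let E : X → ℝ^ℕ be the coordinate map. Then (a_n) ∈ E[X] if and only if: for every l ∈ ℕ there exists k ∈ ℕ such that { m ∈ ℕ : ‖∑_{n=1}^m a_n e_n − ∑_{n=1}^k a_n e_n‖ < 1/l } ∈ 𝓕. -/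
/-!
The sets `s` with `chi s ∈ F` form a proper filter `L` on `ℕ`, and `x` has coordinates `(a n)`
exactly when the partial sums `∑_{n<m} a n • e n` tend to `x` along `L`. So `(a n)` is in the
range iff the partial sums converge along `L`, iff (by completeness) their image filter is
Cauchy, and Cauchyness of an image filter along a proper filter is the displayed condition:
all late terms stay close to a single term.
-/

open Filter MeasureTheory

variable {X : Type*} [NormedAddCommGroup X] [NormedSpace ℝ X]

open Topology

def chiFilter (F : Set (ℕ → Bool)) (h_univ : chi Set.univ ∈ F)
    (h_mono : ∀ s t : Set ℕ, chi s ∈ F → s ⊆ t → chi t ∈ F)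
    (h_inter : ∀ s t : Set ℕ, chi s ∈ F → chi t ∈ F → chi (s ∩ t) ∈ F) : Filter ℕ where
  sets := {s | chi s ∈ F}
  univ_sets := h_univ
  sets_of_superset hs hst := h_mono _ _ hs hst
  inter_sets hs ht := h_inter _ _ hs ht

theorem chiFilter_neBot {F : Set (ℕ → Bool)} {h_univ h_mono h_inter} (h_empty : chi ∅ ∉ F) :
    (chiFilter F h_univ h_mono h_inter).NeBot :=
  ⟨fun h => h_empty (empty_mem_iff_bot.mpr h)⟩

theorem Metric.cauchy_map_iff_exists_eventually_dist_lt {α ι : Type*} [PseudoMetricSpace α]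
    {L : Filter ι} [L.NeBot] {u : ι → α} :
    Cauchy (L.map u) ↔ ∀ ε > 0, ∃ k, ∀ᶠ m in L, dist (u m) (u k) < ε := by
  refine ⟨fun hu ε hε => ?_, fun hu => Metric.cauchy_iff.mpr ⟨inferInstance, fun ε hε => ?_⟩⟩
  · obtain ⟨t, ht, hdist⟩ := (Metric.cauchy_iff.mp hu).2 ε hε
    obtain ⟨k, hk⟩ := nonempty_of_mem (mem_map.mp ht)
    exact ⟨k, mem_of_superset (mem_map.mp ht) fun m hm => hdist _ hm _ hk⟩
  · obtain ⟨k, hk⟩ := hu (ε / 2) (half_pos hε)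
    refine ⟨u '' {m | dist (u m) (u k) < ε / 2}, image_mem_map hk, ?_⟩
    rintro _ ⟨m, hm, rfl⟩ _ ⟨m', hm', rfl⟩
    calc dist (u m) (u m') ≤ dist (u m) (u k) + dist (u m') (u k) := dist_triangle_right _ _ _
      _ < ε / 2 + ε / 2 := add_lt_add hm hm'
      _ = ε := add_halves ε

theorem forall_pos_iff_forall_inv_natCast {p : ℝ → Prop} (hp : ∀ ε ε', ε ≤ ε' → p ε → p ε') :
    (∀ ε > 0, p ε) ↔ ∀ l : ℕ, 1 ≤ l → p (l : ℝ)⁻¹ := by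
  refine ⟨fun h l hl => h _ (by positivity), fun h ε hε => ?_⟩
  obtain ⟨n, hn⟩ := exists_nat_one_div_lt hε
  refine hp _ _ ?_ (h (n + 1) n.succ_pos)
  simpa using hn.le

theorem tendsto_partialSum_iff_forall_thetaSet_mem (e : ℕ → X) (a : ℕ → ℝ) (L : Filter ℕ)
    (x : X) :
    Tendsto (fun m => ∑ n ∈ Finset.range m, a n • e n) L (𝓝 x) ↔
      ∀ ε > 0, thetaSet e x a ε ∈ L := by
  simp only [Metric.tendsto_nhds, dist_eq_norm, norm_sub_rev]
  rfl

theorem range_of_coordinate_map_general [CompleteSpace X]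
    (e : ℕ → X) (f : ℕ → X →L[ℝ] ℝ)
    (F : Set (ℕ → Bool))
    (hfilter : (∀ s t : Set ℕ, chi s ∈ F → s ⊆ t → chi t ∈ F) ∧
      (∀ s t : Set ℕ, chi s ∈ F → chi t ∈ F → chi (s ∩ t) ∈ F) ∧
      chi (∅ : Set ℕ) ∉ F ∧ (∀ s : Set ℕ, (sᶜ).Finite → chi s ∈ F))
    (hFbasis : ∀ (x : X) (ε : ℝ), 0 < ε →
      chi (thetaSet e x (fun n => f n x) ε) ∈ F)
    (huniq : ∀ (x : X) (a : ℕ → ℝ),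
      (∀ ε : ℝ, 0 < ε → chi (thetaSet e x a ε) ∈ F) → ∀ k, a k = f k x) :
    ∀ a : ℕ → ℝ,
      (∃ x : X, ∀ n, f n x = a n) ↔
        ∀ l : ℕ, 1 ≤ l → ∃ k : ℕ,
          chi {m : ℕ | ‖(∑ n ∈ Finset.range m, a n • e n) -
            ∑ n ∈ Finset.range k, a n • e n‖ < (l : ℝ)⁻¹} ∈ F := by
  obtain ⟨h_mono, h_inter, h_empty, h_cofinite⟩ := hfilter
  let L := chiFilter F (h_cofinite _ (by simp)) h_mono h_inter
  have : L.NeBot := chiFilter_neBot h_empty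
  intro a
  set P : ℕ → X := fun m => ∑ n ∈ Finset.range m, a n • e n
  have h_range : (∃ x, ∀ n, f n x = a n) ↔ ∃ x, Tendsto P L (𝓝 x) := by
    simp only [P, tendsto_partialSum_iff_forall_thetaSet_mem]
    refine exists_congr fun x => ⟨fun hx => ?_, fun hx n => (huniq x a hx n).symm⟩
    rw [show a = fun n => f n x from funext fun n => (hx n).symm]
    exact hFbasis x
  rw [h_range, ← cauchy_map_iff_exists_tendsto, Metric.cauchy_map_iff_exists_eventually_dist_lt,
    forall_pos_iff_forall_inv_natCast fun ε ε' hεε' ⟨k, hk⟩ =>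
      ⟨k, hk.mono fun _ hm => hm.trans_le hεε'⟩]
  simp only [dist_eq_norm]
  rfl

/-- Let `(e n)` be an `𝓕`-basis for a Banach space `X` with respect to a
Borel filter `𝓕` (as a subset of `{0,1}^ℕ`), with continuous coordinate functionals
`(f n)`. Then a scalar sequence `(a n)` lies in the range of the coordinate map
`E x = (f n x)ₙ` iff for every `l ≥ 1` there is `k` with
`{ m : ‖∑_{n<m} a n • e n − ∑_{n<k} a n • e n‖ < 1/l } ∈ 𝓕`. -/
theorem range_of_coordinate_map [CompleteSpace X]
    (e : ℕ → X) (f : ℕ → X →L[ℝ] ℝ)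
    (hbi : ∀ k n, f k (e n) = if k = n then 1 else 0)
    (F : Set (ℕ → Bool)) (hFborel : MeasurableSet F)
    (hfilter : (∀ s t : Set ℕ, chi s ∈ F → s ⊆ t → chi t ∈ F) ∧
      (∀ s t : Set ℕ, chi s ∈ F → chi t ∈ F → chi (s ∩ t) ∈ F) ∧
      chi (∅ : Set ℕ) ∉ F ∧ (∀ s : Set ℕ, (sᶜ).Finite → chi s ∈ F))
    (hFbasis : ∀ (x : X) (ε : ℝ), 0 < ε →
      chi (thetaSet e x (fun n => f n x) ε) ∈ F)
    (huniq : ∀ (x : X) (a : ℕ → ℝ),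
      (∀ ε : ℝ, 0 < ε → chi (thetaSet e x a ε) ∈ F) → ∀ k, a k = f k x) :
    ∀ a : ℕ → ℝ,
      (∃ x : X, ∀ n, f n x = a n) ↔
        ∀ l : ℕ, 1 ≤ l → ∃ k : ℕ,
          chi {m : ℕ | ‖(∑ n ∈ Finset.range m, a n • e n) -
            ∑ n ∈ Finset.range k, a n • e n‖ < (l : ℝ)⁻¹} ∈ F :=
  range_of_coordinate_map_general e f F hfilter hFbasis huniq
end

section
/- In the Banach lattice ℓ_∞ (and similarly in c₀ and ℓ_p for 1 ≤ p < ∞), the standard unit vector sequence (e_n) is a σ-order basis: for every x = (x(n))_n ∈ ℓ_∞ there is a unique scalar sequence (a_n) such that the partial sums ∑_{n=1}^m a_n e_n σ-order converge to x, namely a_n = x(n). -/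
open Filter BoundedContinuousFunction

/-- The standard unit vectors in `ℓ∞`, realized as the Banach lattice `ℕ →ᵇ ℝ` of bounded
(sequences =) functions on the discrete space `ℕ`. -/
noncomputable def stdUnitVec (n : ℕ) : ℕ →ᵇ ℝ :=
  BoundedContinuousFunction.ofNormedAddCommGroupDiscrete
    (fun m => if m = n then (1 : ℝ) else 0) 1 (by intro m; dsimp; split <;> simp)

/-- `(y m)` σ-order converges to `x`: there is a decreasing sequence `z k ↓ 0` (infimum `0`
in the lattice) such that for each `k`, `|y m − x| ≤ z k` for all but finitely many `m`. -/
def SigmaOrderConvTo (y : ℕ → (ℕ →ᵇ ℝ)) (x : ℕ →ᵇ ℝ) : Prop :=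
  ∃ z : ℕ → (ℕ →ᵇ ℝ), Antitone z ∧ IsGLB (Set.range z) 0 ∧
    ∀ k, ∀ᶠ m in atTop, |y m - x| ≤ z k

lemma bcf_le_iff {f g : ℕ →ᵇ ℝ} : f ≤ g ↔ ∀ j, f j ≤ g j := Iff.rfl

lemma stdUnitVec_apply (n m : ℕ) : stdUnitVec n m = if m = n then 1 else 0 := rfl

lemma sum_smul_stdUnitVec_apply (a : ℕ → ℝ) (m j : ℕ) :
    (∑ n ∈ Finset.range m, a n • stdUnitVec n) j = if j < m then a j else 0 := by
  induction m with
  | zero => simp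
  | succ m ih =>
    rw [Finset.sum_range_succ]
    have : (∑ n ∈ Finset.range m, a n • stdUnitVec n + a m • stdUnitVec m) j
        = (∑ n ∈ Finset.range m, a n • stdUnitVec n) j + a m * stdUnitVec m j := rfl
    rw [this, ih, stdUnitVec_apply]
    rcases lt_trichotomy j m with h | h | h
    · simp [h, h.trans (Nat.lt_succ_self m), h.ne]
    · simp [h, Nat.lt_succ_self m]
    · simp [h.ne', Nat.not_lt.mpr h.le, Nat.not_lt.mpr (Nat.succ_le_of_lt h)]

/-- In the Banach lattice `ℓ∞` of bounded real sequences, the standard unit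
vectors form a σ-order basis: for every `x ∈ ℓ∞` there is a unique scalar sequence `(a n)`
whose partial sums `∑_{n<m} a n • e n` σ-order converge to `x`, namely `a n = x n`. -/
theorem stdUnitVec_sigmaOrder_basis_linfty (x : ℕ →ᵇ ℝ) :
    SigmaOrderConvTo (fun m => ∑ n ∈ Finset.range m, x n • stdUnitVec n) x ∧
      ∀ a : ℕ → ℝ,
        SigmaOrderConvTo (fun m => ∑ n ∈ Finset.range m, a n • stdUnitVec n) x →
          a = fun n => x n := by
  constructor
  · -- existence
    refine ⟨fun k => BoundedContinuousFunction.ofNormedAddCommGroupDiscrete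
      (fun j => if j < k then 0 else ‖x‖) ‖x‖ ?_, ?_, ?_, ?_⟩
    · intro j; dsimp; split
      · simp
      · simp [abs_of_nonneg (norm_nonneg x)]
    · intro k k' hkk'
      rw [bcf_le_iff]
      intro j
      show (if j < k' then (0:ℝ) else ‖x‖) ≤ if j < k then 0 else ‖x‖
      by_cases h : j < k
      · simp [h, h.trans_le hkk']
      · split
        · simp [norm_nonneg]
        · simp
    · constructor
      · rintro _ ⟨k, rfl⟩
        rw [bcf_le_iff]; intro j
        show (0:ℝ) ≤ if j < k then 0 else ‖x‖
        split <;> simp [norm_nonneg]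
      · intro w hw
        rw [bcf_le_iff]; intro j
        have := (hw ⟨j + 1, rfl⟩) 
        have h2 := bcf_le_iff.mp this j
        simpa [Nat.lt_succ_self j] using h2
    · intro k
      filter_upwards [eventually_ge_atTop k] with m hm
      rw [bcf_le_iff]; intro j
      have : |(∑ n ∈ Finset.range m, x n • stdUnitVec n) - x| j
          = |(∑ n ∈ Finset.range m, x n • stdUnitVec n) j - x j| := rfl
      rw [this, sum_smul_stdUnitVec_apply]
      show _ ≤ if j < k then (0:ℝ) else ‖x‖
      by_cases h : j < m
      · have hj : ¬ (j < k) ∨ (j < k) := (em _).symm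
        simp only [h, if_pos, sub_self, abs_zero]
        split <;> simp [norm_nonneg]
      · have hk : ¬ j < k := fun hjk => h (hjk.trans_le hm)
        rw [if_neg h, if_neg hk, zero_sub, abs_neg]
        calc |x j| = ‖x j‖ := (Real.norm_eq_abs _).symm
          _ ≤ ‖x‖ := x.norm_coe_le_norm j
  · -- uniqueness
    rintro a ⟨z, hz, hglb, h⟩
    funext j
    have key : ∀ k, |a j - x j| ≤ z k j := by
      intro k
      obtain ⟨N, hN⟩ := (h k).exists_forall_of_atTop
      have hm := hN (max N (j + 1)) (le_max_left _ _)
      have hj : j < max N (j + 1) := lt_of_lt_of_le (Nat.lt_succ_self j) (le_max_right _ _)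
      have := bcf_le_iff.mp hm j
      have heval : |(∑ n ∈ Finset.range (max N (j+1)), a n • stdUnitVec n) - x| j
          = |(∑ n ∈ Finset.range (max N (j+1)), a n • stdUnitVec n) j - x j| := rfl
      rw [heval, sum_smul_stdUnitVec_apply, if_pos hj] at this
      exact this
    have hzpos : ∀ k i, (0:ℝ) ≤ z k i := by
      intro k i
      exact bcf_le_iff.mp (hglb.1 ⟨k, rfl⟩) i
    -- w = |a j - x j| • e j is a lower bound of range z
    have hw : |a j - x j| • stdUnitVec j ∈ lowerBounds (Set.range z) := by
      rintro _ ⟨k, rfl⟩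
      rw [bcf_le_iff]; intro i
      have : (|a j - x j| • stdUnitVec j) i = |a j - x j| * stdUnitVec j i := rfl
      rw [this, stdUnitVec_apply]
      by_cases h' : i = j
      · subst h'; simpa using key k
      · simp [h', hzpos k i]
    have := bcf_le_iff.mp (hglb.2 hw) j
    have hval : (|a j - x j| • stdUnitVec j) j = |a j - x j| := by
      show |a j - x j| * stdUnitVec j j = _
      rw [stdUnitVec_apply]; simp
    rw [hval] at this
    have : |a j - x j| = 0 := le_antisymm (by simpa using this) (abs_nonneg _)
    have := abs_eq_zero.mp this
    linarith [sub_eq_zero.mp this]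
end
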